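/- Let X ⊆ ℝ^d be a G-stable subset (g·x ∈ X for every g ∈ G and x ∈ X). Then the map induced by π|X from the quotient topological space X/G (the quotient of X by the equivalence relation x ∼ y ⟺ ∃ g ∈ G, y = g·x, equipped with the quotient topology) to π(X) (equipped with the subspace topology of ℝ^m) is a homeomorphism. -/

import Mathlib

/-!
Invariants separate `G`-orbits: if `y ∉ G • x`, the invariant polynomial `w ↦ ∏_g ‖w - g • x‖²`
vanishes at `x` but not at `y`; as it lies in the algebra generated by the `pᵢ`, some `pᵢ`
separates `x` from `y`.
Since `‖x‖²` is itself invariant, it is a polynomial in `π x`, which makes `π` proper. A `G`-stable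
`X` is then saturated for `π`, and the restriction of a proper map to a saturated set is a closed map
onto its image, i.e. identifies the image with the quotient of `X` by the fibres of `π`, which are
exactly the `G`-orbits.
-/

open MvPolynomial

/-- The matrix associated to an element of a subgroup of the orthogonal group `O(d, ℝ)`. -/
def matOf {d : ℕ} (G : Subgroup (Matrix.orthogonalGroup (Fin d) ℝ)) (g : G) :
    Matrix (Fin d) (Fin d) ℝ :=
  ((g : Matrix.orthogonalGroup (Fin d) ℝ) : Matrix (Fin d) (Fin d) ℝ)

open Matrix Topology Set

lemma dotProduct_mulVec_self_of_mem_orthogonalGroup {n R : Type*} [Fintype n] [DecidableEq n]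
    [CommRing R] {A : Matrix n n R} (hA : A ∈ orthogonalGroup n R) (v : n → R) :
    (A *ᵥ v) ⬝ᵥ (A *ᵥ v) = v ⬝ᵥ v := by
  rw [dotProduct_mulVec, ← mulVec_transpose, mulVec_mulVec,
    (mem_orthogonalGroup_iff' n R).mp hA, one_mulVec]

lemma eval_eq_of_mem_adjoin {σ ι R : Type*} [CommRing R] {p : ι → MvPolynomial σ R}
    {x y : σ → R} (hxy : ∀ i, eval x (p i) = eval y (p i)) {f : MvPolynomial σ R}
    (hf : f ∈ Algebra.adjoin R (range p)) : eval x f = eval y f := by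
  have hle : Algebra.adjoin R (range p) ≤ AlgHom.equalizer (aeval x) (aeval y) :=
    Algebra.adjoin_le (by rintro _ ⟨i, rfl⟩; simpa [coe_aeval_eq_eval] using hxy i)
  simpa [coe_aeval_eq_eval] using hle hf

lemma exists_eval_eq_of_mem_adjoin {σ ι R : Type*} [CommRing R] {p : ι → MvPolynomial σ R}
    {f : MvPolynomial σ R} (hf : f ∈ Algebra.adjoin R (range p)) :
    ∃ Q : MvPolynomial ι R, ∀ x, eval x f = eval (fun i => eval x (p i)) Q := by
  rw [Algebra.adjoin_range_eq_range_aeval] at hf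
  obtain ⟨Q, rfl⟩ := hf
  refine ⟨Q, fun x => ?_⟩
  change aeval x (aeval p Q) = _
  rw [← AlgHom.comp_apply, comp_aeval]
  rfl

lemma norm_le_sqrt_dotProduct_self {n : Type*} [Fintype n] (x : n → ℝ) : ‖x‖ ≤ √(x ⬝ᵥ x) := by
  refine (pi_norm_le_iff_of_nonneg (Real.sqrt_nonneg _)).mpr fun i => ?_
  refine Real.abs_le_sqrt ?_
  simpa [dotProduct, sq] using
    Finset.single_le_sum (f := fun j => x j * x j) (fun j _ => mul_self_nonneg _)
      (Finset.mem_univ i)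

lemma isProperMap_of_norm_le {E F : Type*} [NormedAddCommGroup E] [ProperSpace E]
    [TopologicalSpace F] [T2Space F] [CompactlyGeneratedSpace F] {f : E → F}
    (hf : Continuous f) {q : F → ℝ} (hq : Continuous q) (hfq : ∀ x, ‖x‖ ≤ q (f x)) :
    IsProperMap f := by
  refine isProperMap_iff_isCompact_preimage.mpr ⟨hf, fun K hK => ?_⟩
  obtain ⟨C, hC⟩ := hK.bddAbove_image hq.continuousOn
  refine Metric.isCompact_of_isClosed_isBounded (hK.isClosed.preimage hf) ?_
  exact isBounded_iff_forall_norm_le.mpr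
    ⟨C, fun x hx => (hfq x).trans (hC (mem_image_of_mem q hx))⟩

/-- On a saturated subset, a proper map induces a homeomorphism from the quotient by its fibres
onto the image. -/
lemma IsProperMap.isStrictMap_domRestrict {α β : Type*} [TopologicalSpace α] [TopologicalSpace β]
    {f : α → β} (hf : IsProperMap f) {s : Set α} (hs : f ⁻¹' (f '' s) ⊆ s) :
    Topology.IsStrictMap (s.domRestrict f) := by
  have hsat : f ⁻¹' (f '' s) = s := hs.antisymm (subset_preimage_image f s)
  have hcomp : s.domRestrict f =
      Subtype.val ∘ (f '' s).restrictPreimage f ∘ Homeomorph.setCongr hsat.symm := rfl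
  rw [hcomp, ← IsEmbedding.subtypeVal.isStrictMap_iff, Homeomorph.isStrictMap_comp_iff]
  exact ((hf.restrictPreimage _).isClosedMap).isStrictMap hf.continuous.restrictPreimage

section Invariants

variable {d : ℕ} (G : Subgroup (orthogonalGroup (Fin d) ℝ))

lemma matOf_mulVec_mulVec (g h : G) (v : Fin d → ℝ) :
    matOf G g *ᵥ (matOf G h *ᵥ v) = matOf G (g * h) *ᵥ v :=
  mulVec_mulVec _ _ _

lemma dotProduct_matOf_mulVec_self (g : G) (v : Fin d → ℝ) :
    (matOf G g *ᵥ v) ⬝ᵥ (matOf G g *ᵥ v) = v ⬝ᵥ v :=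
  dotProduct_mulVec_self_of_mem_orthogonalGroup (g : orthogonalGroup (Fin d) ℝ).2 v

def IsInvariantPoly (f : MvPolynomial (Fin d) ℝ) : Prop :=
  ∀ (g : G) (x : Fin d → ℝ), eval (matOf G g *ᵥ x) f = eval x f

noncomputable def sqDistPoly (c : Fin d → ℝ) : MvPolynomial (Fin d) ℝ :=
  ∑ i, (X i - C (c i)) ^ 2

lemma eval_sqDistPoly (c w : Fin d → ℝ) : eval w (sqDistPoly c) = (w - c) ⬝ᵥ (w - c) := by
  simp [sqDistPoly, dotProduct, sq]

lemma isInvariantPoly_sqDistPoly_zero : IsInvariantPoly G (sqDistPoly 0) := by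
  intro g x
  simp only [eval_sqDistPoly, sub_zero, dotProduct_matOf_mulVec_self]

noncomputable def orbitPoly [Fintype G] (x : Fin d → ℝ) : MvPolynomial (Fin d) ℝ :=
  ∏ g : G, sqDistPoly (matOf G g *ᵥ x)

variable [Fintype G]

lemma eval_orbitPoly (x w : Fin d → ℝ) :
    eval w (orbitPoly G x) = ∏ g : G, (w - matOf G g *ᵥ x) ⬝ᵥ (w - matOf G g *ᵥ x) := by
  simp only [orbitPoly, map_prod, eval_sqDistPoly]

lemma isInvariantPoly_orbitPoly (x : Fin d → ℝ) : IsInvariantPoly G (orbitPoly G x) := by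
  intro h w
  simp only [eval_orbitPoly]
  refine Fintype.prod_equiv (Equiv.mulLeft h⁻¹) _ _ fun g => ?_
  have hfactor : matOf G h *ᵥ w - matOf G g *ᵥ x =
      matOf G h *ᵥ (w - matOf G (h⁻¹ * g) *ᵥ x) := by
    rw [mulVec_sub, matOf_mulVec_mulVec, mul_inv_cancel_left]
  rw [hfactor, dotProduct_matOf_mulVec_self]
  rfl

lemma eval_orbitPoly_self (x : Fin d → ℝ) : eval x (orbitPoly G x) = 0 := by
  rw [eval_orbitPoly]
  exact Finset.prod_eq_zero (Finset.mem_univ 1) (by simp [matOf])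

lemma eval_orbitPoly_pos {x y : Fin d → ℝ} (hy : ∀ g : G, y ≠ matOf G g *ᵥ x) :
    0 < eval y (orbitPoly G x) := by
  rw [eval_orbitPoly]
  refine Finset.prod_pos fun g _ => ?_
  exact lt_of_le_of_ne (Fintype.sum_nonneg fun i => mul_self_nonneg _)
    (Ne.symm (dotProduct_self_eq_zero.not.mpr (sub_ne_zero.mpr (hy g))))

lemma exists_eq_matOf_mulVec_of_eval_eq {m : ℕ} (p : Fin m → MvPolynomial (Fin d) ℝ)
    (hgen : ∀ f, IsInvariantPoly G f → f ∈ Algebra.adjoin ℝ (range p)) {x y : Fin d → ℝ}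
    (hxy : ∀ i, eval x (p i) = eval y (p i)) : ∃ g : G, y = matOf G g *ᵥ x := by
  by_contra! hy
  have hF := eval_eq_of_mem_adjoin hxy (hgen _ (isInvariantPoly_orbitPoly G x))
  exact (eval_orbitPoly_pos G hy).ne' (hF ▸ eval_orbitPoly_self G x)

end Invariants

/-- If `X ⊆ ℝ^d` is `G`-stable, the map induced by `π|X` from the quotient topological space
`X/G` (quotient of `X` by the orbit equivalence relation, with the quotient topology) to
`π(X)` (with the subspace topology) is a homeomorphism. -/
theorem stmt3 {d m : ℕ}
    (G : Subgroup (Matrix.orthogonalGroup (Fin d) ℝ)) [Finite G]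
    (p : Fin m → MvPolynomial (Fin d) ℝ)
    (hinv : ∀ (i : Fin m) (g : G) (x : Fin d → ℝ),
      eval ((matOf G g).mulVec x) (p i) = eval x (p i))
    (hgen : ∀ f : MvPolynomial (Fin d) ℝ,
      (∀ (g : G) (x : Fin d → ℝ), eval ((matOf G g).mulVec x) f = eval x f) →
        f ∈ Algebra.adjoin ℝ (Set.range p))
    (π : (Fin d → ℝ) → (Fin m → ℝ))
    (hπ : ∀ (x : Fin d → ℝ) (i : Fin m), π x i = eval x (p i))
    (X : Set (Fin d → ℝ))
    (hX : ∀ (g : G), ∀ x ∈ X, (matOf G g).mulVec x ∈ X)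
    (s : Setoid ↥X)
    (hs : ∀ a b : ↥X, s.r a b ↔ ∃ g : G, (b : Fin d → ℝ) = (matOf G g).mulVec ↑a) :
    ∃ h : Quotient s ≃ₜ ↥(π '' X),
      ∀ x : ↥X, ((h (Quotient.mk s x) : (Fin m → ℝ))) = π ↑x := by
  cases nonempty_fintype G
  have hπ_cont : Continuous π :=
    continuous_pi fun i => by simpa only [hπ] using continuous_eval (p i)
  have hπ_fiber (x y : Fin d → ℝ) : π x = π y ↔ ∃ g : G, y = matOf G g *ᵥ x := by
    refine ⟨fun h => exists_eq_matOf_mulVec_of_eval_eq G p hgen fun i => ?_, ?_⟩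
    · rw [← hπ, h, hπ]
    · rintro ⟨g, rfl⟩
      ext i
      rw [hπ, hπ, hinv]
  obtain ⟨Q, hQ⟩ := exists_eval_eq_of_mem_adjoin (hgen _ (isInvariantPoly_sqDistPoly_zero G))
  have hπ_proper : IsProperMap π := by
    refine isProperMap_of_norm_le hπ_cont (q := fun y => √(eval y Q)) (continuous_eval Q).sqrt
      fun x => ?_
    have hπx : (fun i => eval x (p i)) = π x := funext fun i => (hπ x i).symm
    simpa [← hπx, ← hQ, eval_sqDistPoly] using norm_le_sqrt_dotProduct_self x
  have hX_sat : π ⁻¹' (π '' X) ⊆ X := by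
    rintro y ⟨x, hx, hxy⟩
    obtain ⟨g, rfl⟩ := (hπ_fiber x y).mp hxy
    exact hX g x hx
  refine ⟨(Homeomorph.Quotient.congrRight fun a b => ?_).trans
    ((Homeomorph.quotientKerEquivRange (hπ_proper.isStrictMap_domRestrict hX_sat)).trans
      (Homeomorph.setCongr (range_domRestrict π X))), fun x => rfl⟩
  rw [Setoid.ker_def]
  exact (hs a b).trans (hπ_fiber a b).symm
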